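/- arXiv:1311.1865 — 7 statements merged into one kernel-verified Lean document; each statement's English description precedes it below -/
import Mathlib

section
/- In the group G of the Fuchs example (subgroup of ℚ² generated by (1,0), (0,1), (1/2,1/2), (1/3^k,0), and (0,1/5^k) for all k ≥ 1), the element x₁ = (1,0) has characteristic with h_3(x₁) = ∞ and h_p(x₁) finite for all primes p ≠ 3; in particular h_2(x₁) = 0. -/
def fuchsGens : Set (ℚ × ℚ) :=
  {((1 : ℚ), (0 : ℚ)), ((0 : ℚ), (1 : ℚ)), ((1/2 : ℚ), (1/2 : ℚ))} ∪
    {x | ∃ k : ℕ, 1 ≤ k ∧ x = ((1 / 3 ^ k : ℚ), (0 : ℚ))} ∪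
    {x | ∃ k : ℕ, 1 ≤ k ∧ x = ((0 : ℚ), (1 / 5 ^ k : ℚ))}

def fuchsGroup : AddSubgroup (ℚ × ℚ) := AddSubgroup.closure fuchsGens

/-!
Every element of the Fuchs group has the form `(s / (2·3^i), t / (2·5^i))` with `s + t` even:
such elements form a subgroup (in fact equal to the Fuchs group) containing the generators.
Hence if `p^k • y = x₁` then `p^k ∣ 2·3^i`, which bounds `k` for `p ≠ 3`, while
`2 • y = x₁` would force `s = 3^i` and `t = 0`, contradicting the parity condition.
Finally `x₁ = 3^k • (1/3^k, 0)`.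
-/

def halfFractionSubgroup (a b : ℤ) (ha : Odd a) (hb : Odd b) : AddSubgroup (ℚ × ℚ) where
  carrier :=
    {x | ∃ (i : ℕ) (s t : ℤ), 2 * a ^ i * x.1 = s ∧ 2 * b ^ i * x.2 = t ∧ Even (s + t)}
  zero_mem' := ⟨0, 0, 0, by simp, by simp, by simp⟩
  add_mem' := by
    rintro x y ⟨i, s, t, hs, ht, hst⟩ ⟨j, u, v, hu, hv, huv⟩
    refine ⟨i + j, s * a ^ j + u * a ^ i, t * b ^ j + v * b ^ i, ?_, ?_, ?_⟩
    · push_cast [Prod.fst_add]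
      linear_combination (a : ℚ) ^ j * hs + (a : ℚ) ^ i * hu
    · push_cast [Prod.snd_add]
      linear_combination (b : ℚ) ^ j * ht + (b : ℚ) ^ i * hv
    · have ha' : ¬Even a := Int.not_even_iff_odd.mpr ha
      have hb' : ¬Even b := Int.not_even_iff_odd.mpr hb
      simp only [Int.even_add, Int.even_mul, Int.even_pow, ha', hb', false_and, or_false]
        at hst huv ⊢
      tauto
  neg_mem' := by
    rintro x ⟨i, s, t, hs, ht, hst⟩
    refine ⟨i, -s, -t, ?_, ?_, by rw [← neg_add]; exact hst.neg⟩
    · push_cast [Prod.fst_neg]; linear_combination -hs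
    · push_cast [Prod.snd_neg]; linear_combination -ht

namespace halfFractionSubgroup

variable {a b : ℤ} {ha : Odd a} {hb : Odd b} {x : ℚ × ℚ}

theorem exists_dvd_of_zsmul_eq {n : ℤ} (hx : x ∈ halfFractionSubgroup a b ha hb)
    (hn : n • x = (1, 0)) : ∃ i : ℕ, n ∣ 2 * a ^ i := by
  obtain ⟨i, s, -, hs, -, -⟩ := hx
  have hnx : (n : ℚ) * x.1 = 1 := by simpa using congrArg Prod.fst hn
  refine ⟨i, s, ?_⟩
  have hcast : ((2 * a ^ i : ℤ) : ℚ) = (n * s : ℤ) := by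
    push_cast
    linear_combination (-2 * (a : ℚ) ^ i) * hnx + (n : ℚ) * hs
  exact_mod_cast hcast

theorem two_zsmul_ne (hx : x ∈ halfFractionSubgroup a b ha hb) : (2 : ℤ) • x ≠ (1, 0) := by
  obtain ⟨i, s, t, hs, ht, hst⟩ := hx
  intro h2x
  have hx1 : 2 * x.1 = 1 := by simpa using congrArg Prod.fst h2x
  have hx2 : 2 * x.2 = 0 := by simpa using congrArg Prod.snd h2x
  have hs' : s = a ^ i := by
    have hcast : (s : ℚ) = (a ^ i : ℤ) := by
      push_cast
      linear_combination -hs + (a : ℚ) ^ i * hx1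
    exact_mod_cast hcast
  have ht' : t = 0 := by
    have hcast : (t : ℚ) = 0 := by linear_combination -ht + (b : ℚ) ^ i * hx2
    exact_mod_cast hcast
  rw [hs', ht', add_zero] at hst
  exact Int.not_even_iff_odd.mpr ha.pow hst

end halfFractionSubgroup

theorem fuchsGroup_le_halfFractionSubgroup :
    fuchsGroup ≤ halfFractionSubgroup 3 5 (by decide) (by decide) := by
  refine AddSubgroup.closure_le _ |>.mpr ?_
  rintro x (((rfl | rfl | rfl) | ⟨k, -, rfl⟩) | ⟨k, -, rfl⟩)
  · exact ⟨0, 2, 0, by norm_num, by norm_num, by decide⟩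
  · exact ⟨0, 0, 2, by norm_num, by norm_num, by decide⟩
  · exact ⟨0, 1, 1, by norm_num, by norm_num, by decide⟩
  · exact ⟨k, 2, 0, by simp, by simp, by decide⟩
  · exact ⟨k, 0, 2, by simp, by simp, by decide⟩

theorem one_div_three_pow_mem_fuchsGroup (k : ℕ) :
    ((1 / 3 ^ k : ℚ), (0 : ℚ)) ∈ fuchsGroup := by
  apply AddSubgroup.subset_closure
  rcases Nat.eq_zero_or_pos k with rfl | hk
  · simp [fuchsGens]
  · exact Or.inl (Or.inr ⟨k, hk, rfl⟩)

theorem Nat.le_one_of_pow_dvd_two_mul_pow {p q k i : ℕ} (hp : p.Prime) (hq : q.Prime)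
    (hpq : p ≠ q) (h : p ^ k ∣ 2 * q ^ i) : k ≤ 1 := by
  have hcop : Nat.Coprime (p ^ k) (q ^ i) := ((Nat.coprime_primes hp hq).mpr hpq).pow k i
  have hle : p ^ k ≤ 2 := Nat.le_of_dvd two_pos (hcop.dvd_of_dvd_mul_right h)
  have h2k : 2 ^ k ≤ 2 ^ 1 := (Nat.pow_le_pow_left hp.two_le k).trans hle
  exact (Nat.pow_le_pow_iff_right one_lt_two).mp h2k

/-- h_3(x₁) = ∞, h_p(x₁) finite for p ≠ 3, and h_2(x₁) = 0 in the Fuchs group. -/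
theorem fuchs_characteristic_x1 :
    (∀ k : ℕ, ∃ y ∈ fuchsGroup, ((3 : ℤ) ^ k) • y = (((1 : ℚ), (0 : ℚ)) : ℚ × ℚ)) ∧
    (∀ p : ℕ, p.Prime → p ≠ 3 →
      ∃ N : ℕ, ∀ k : ℕ,
        (∃ y ∈ fuchsGroup, ((p : ℤ) ^ k) • y = (((1 : ℚ), (0 : ℚ)) : ℚ × ℚ)) → k ≤ N) ∧
    ¬ ∃ y ∈ fuchsGroup, (2 : ℤ) • y = (((1 : ℚ), (0 : ℚ)) : ℚ × ℚ) := by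
  refine ⟨fun k => ⟨_, one_div_three_pow_mem_fuchsGroup k, by simp⟩, ?_, ?_⟩
  · rintro p hp hp3
    refine ⟨1, fun k ⟨y, hy, hpy⟩ => ?_⟩
    obtain ⟨i, hi⟩ := halfFractionSubgroup.exists_dvd_of_zsmul_eq
      (fuchsGroup_le_halfFractionSubgroup hy) hpy
    exact Nat.le_one_of_pow_dvd_two_mul_pow hp Nat.prime_three hp3 (by exact_mod_cast hi)
  · rintro ⟨y, hy, h2y⟩
    exact halfFractionSubgroup.two_zsmul_ne (fuchsGroup_le_halfFractionSubgroup hy) h2y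
end

section
/- Let G be a torsion-free abelian group and x, y ∈ G linearly independent elements. Suppose there is a prime p such that p divides x + y in G but p divides neither x nor y in G. Then in any internal direct sum decomposition G = A ⊕ B in which x lies in A or B and y lies in A or B, x and y lie in the same summand. -/
theorem link_forces_same_summand {G : Type*} [AddCommGroup G]
    [NoZeroSMulDivisors ℤ G] (x y : G)
    (hindep : ∀ m n : ℤ, m • x + n • y = 0 → m = 0 ∧ n = 0)
    (p : ℕ) (hp : p.Prime)
    (hdvd : ∃ h : G, (p : ℤ) • h = x + y)
    (hndx : ¬ ∃ h : G, (p : ℤ) • h = x)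
    (hndy : ¬ ∃ h : G, (p : ℤ) • h = y)
    (A B : AddSubgroup G) (hsup : A ⊔ B = ⊤) (hinf : A ⊓ B = ⊥)
    (hx : x ∈ A ∨ x ∈ B) (hy : y ∈ A ∨ y ∈ B) :
    (x ∈ A ∧ y ∈ A) ∨ (x ∈ B ∧ y ∈ B) := by
  have key : ∀ (A B : AddSubgroup G), A ⊔ B = ⊤ → A ⊓ B = ⊥ →
      x ∈ A → y ∈ B → (¬ ∃ h : G, (p : ℤ) • h = x) → False := by
    intro A B hsup hinf hxA hyB hnd
    obtain ⟨h, hh⟩ := hdvd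
    have hmem : h ∈ A ⊔ B := by rw [hsup]; trivial
    obtain ⟨a, ha, b, hb, hab⟩ := AddSubgroup.mem_sup.mp hmem
    have hz : (p : ℤ) • a - x ∈ A ⊓ B := by
      constructor
      · exact A.sub_mem (A.zsmul_mem ha _) hxA
      · have heq : (p : ℤ) • a - x = y - (p : ℤ) • b := by
          rw [sub_eq_sub_iff_add_eq_add, ← smul_add, hab, hh, add_comm]
        rw [heq]
        exact B.sub_mem hyB (B.zsmul_mem hb _)
    rw [hinf, AddSubgroup.mem_bot, sub_eq_zero] at hz
    exact hnd ⟨a, hz⟩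
  rcases hx with hxA | hxB <;> rcases hy with hyA | hyB
  · exact Or.inl ⟨hxA, hyA⟩
  · exact absurd (key A B hsup hinf hxA hyB hndx) (by simp)
  · refine absurd (key B A ?_ ?_ hxB hyA hndx) (by simp)
    · rwa [sup_comm]
    · rwa [inf_comm]
  · exact Or.inr ⟨hxB, hyB⟩
end

section
/- Let G be a torsion-free abelian group of finite rank n with a basis {x₁,...,xₙ} of maximal linearly independent elements such that: (i) each xᵢ lies in some summand of any direct decomposition, and (ii) for each i < n there is a prime pᵢ dividing xᵢ + xᵢ₊₁ in G but dividing neither xᵢ nor xᵢ₊₁. Then any internal direct sum decomposition G = A ⊕ B with each xᵢ contained in A or B must have all xᵢ in the same summand, hence one summand has rank n and the other has rank 0 and is therefore trivial; in particular, under these hypotheses G is indecomposable. -/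
theorem chain_of_links_indecomposable {G : Type*} [AddCommGroup G]
    [NoZeroSMulDivisors ℤ G] (n : ℕ) (hn : 1 ≤ n) (x : Fin n → G)
    (hbasis : LinearIndependent ℤ x ∧
      ∀ g : G, ∃ m : ℤ, m ≠ 0 ∧ m • g ∈ Submodule.span ℤ (Set.range x))
    (hsummand : ∀ A B : AddSubgroup G, A ⊔ B = ⊤ → A ⊓ B = ⊥ →
      ∀ i, x i ∈ A ∨ x i ∈ B)
    (hlinks : ∀ i : Fin n, ∀ hi : (i : ℕ) + 1 < n,
      ∃ p : ℕ, p.Prime ∧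
        (∃ h : G, (p : ℤ) • h = x i + x ⟨(i : ℕ) + 1, hi⟩) ∧
        ¬ (∃ h : G, (p : ℤ) • h = x i) ∧
        ¬ (∃ h : G, (p : ℤ) • h = x ⟨(i : ℕ) + 1, hi⟩)) :
    (∀ A B : AddSubgroup G, A ⊔ B = ⊤ → A ⊓ B = ⊥ →
      (∀ i, x i ∈ A) ∨ (∀ i, x i ∈ B)) ∧
    ¬ ∃ A B : AddSubgroup G, A ≠ ⊥ ∧ B ≠ ⊥ ∧ A ⊔ B = ⊤ ∧ A ⊓ B = ⊥ := by
  obtain ⟨hli, hspan⟩ := hbasis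
  -- key step: consecutive elements lie in the same summand
  have key : ∀ A B : AddSubgroup G, A ⊔ B = ⊤ → A ⊓ B = ⊥ →
      (∀ i, x i ∈ A ∨ x i ∈ B) →
      ∀ i : Fin n, ∀ hi : (i : ℕ) + 1 < n, x i ∈ A → x ⟨(i : ℕ) + 1, hi⟩ ∈ A := by
    intro A B hsup hinf hmem i hi hxA
    rcases hmem ⟨(i : ℕ) + 1, hi⟩ with h | hB
    · exact h
    exfalso
    obtain ⟨p, hp, ⟨h, hh⟩, hnd1, _⟩ := hlinks i hi
    have hh' : h ∈ A ⊔ B := by rw [hsup]; trivial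
    rw [AddSubgroup.mem_sup] at hh'
    obtain ⟨a, ha, b, hb, rfl⟩ := hh'
    rw [smul_add] at hh
    have heq : (p : ℤ) • a - x i = x ⟨(i : ℕ) + 1, hi⟩ - (p : ℤ) • b := by
      rw [sub_eq_sub_iff_add_eq_add]
      exact hh.trans (add_comm _ _)
    have hmemAB : (p : ℤ) • a - x i ∈ A ⊓ B := by
      refine ⟨A.sub_mem (A.zsmul_mem ha _) hxA, ?_⟩
      rw [heq]
      exact B.sub_mem hB (B.zsmul_mem hb _)
    rw [hinf, AddSubgroup.mem_bot, sub_eq_zero] at hmemAB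
    exact hnd1 ⟨a, hmemAB⟩
  -- propagate along the chain
  have step : ∀ A B : AddSubgroup G, A ⊔ B = ⊤ → A ⊓ B = ⊥ →
      (∀ i, x i ∈ A ∨ x i ∈ B) → x ⟨0, hn⟩ ∈ A → ∀ i, x i ∈ A := by
    intro A B hsup hinf hmem h0 i
    obtain ⟨k, hk⟩ := i
    induction k with
    | zero => exact h0
    | succ m ih =>
      have hm : m < n := Nat.lt_of_succ_lt hk
      exact key A B hsup hinf hmem ⟨m, hm⟩ hk (ih hm)
  have part1 : ∀ A B : AddSubgroup G, A ⊔ B = ⊤ → A ⊓ B = ⊥ →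
      (∀ i, x i ∈ A) ∨ (∀ i, x i ∈ B) := by
    intro A B hsup hinf
    have hmem := hsummand A B hsup hinf
    rcases hmem ⟨0, hn⟩ with h0 | h0
    · exact Or.inl (step A B hsup hinf hmem h0)
    · exact Or.inr (step B A (by rwa [sup_comm]) (by rwa [inf_comm])
        (fun i => (hmem i).symm) h0)
  -- if all x i lie in A, then B is trivial
  have triv : ∀ A B : AddSubgroup G, A ⊔ B = ⊤ → A ⊓ B = ⊥ →
      (∀ i, x i ∈ A) → B = ⊥ := by
    intro A B hsup hinf hall
    ext b
    simp only [AddSubgroup.mem_bot]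
    constructor
    · intro hb
      obtain ⟨m, hm, hmem⟩ := hspan b
      have hle : Submodule.span ℤ (Set.range x) ≤ AddSubgroup.toIntSubmodule A := by
        rw [Submodule.span_le]; rintro _ ⟨i, rfl⟩; exact hall i
      have hAB : m • b ∈ A ⊓ B := ⟨hle hmem, B.zsmul_mem hb m⟩
      rw [hinf, AddSubgroup.mem_bot] at hAB
      rcases smul_eq_zero.mp hAB with h | h
      · exact absurd h hm
      · exact h
    · rintro rfl; exact B.zero_mem
  refine ⟨part1, ?_⟩
  rintro ⟨A, B, hA, hB, hsup, hinf⟩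
  rcases part1 A B hsup hinf with hall | hall
  · exact hB (triv A B hsup hinf hall)
  · exact hA (triv B A (by rwa [sup_comm]) (by rwa [inf_comm]) hall)
end

section
/- Let G be a torsion-free abelian group of finite rank. Then G is decomposable (an internal direct sum of two nonzero subgroups) if and only if G has a basis partitioned into two nonempty sets {a₁,...,aₙ} and {b₁,...,bₘ} with the property: for all rationals q₁,...,qₙ, r₁,...,rₘ, if the element Σ qᵢaᵢ + Σ rⱼbⱼ lies in G, then the element Σ qᵢaᵢ also lies in G (as an element of the divisible hull). -/
open TensorProduct

/-- The canonical map from `G` into its divisible hull `ℚ ⊗[ℤ] G`. -/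
noncomputable def toHull {G : Type*} [AddCommGroup G] (g : G) : ℚ ⊗[ℤ] G :=
  (1 : ℚ) ⊗ₜ[ℤ] g

section Aux

variable {G : Type*} [AddCommGroup G]

noncomputable def hullMap (G : Type*) [AddCommGroup G] : G →ₗ[ℤ] ℚ ⊗[ℤ] G :=
  TensorProduct.mk ℤ ℚ G 1

lemma toHull_eq (g : G) : toHull g = hullMap G g := rfl

instance hullMap_isLocalizedModule : IsLocalizedModule (nonZeroDivisors ℤ) (hullMap G) :=
  (isLocalizedModule_iff_isBaseChange (nonZeroDivisors ℤ) ℚ _).mpr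
    (TensorProduct.isBaseChange ℤ G ℚ)

lemma toHull_injective [NoZeroSMulDivisors ℤ G] :
    Function.Injective (toHull (G := G)) := by
  intro x y h
  have h0 : hullMap G (x - y) = 0 := by
    rw [map_sub, ← toHull_eq, ← toHull_eq, h, sub_self]
  obtain ⟨s, hs⟩ := (IsLocalizedModule.eq_zero_iff (nonZeroDivisors ℤ) (hullMap G)).mp h0
  have hs0 : (s : ℤ) ≠ 0 := nonZeroDivisors.coe_ne_zero s
  exact sub_eq_zero.mp ((smul_eq_zero.mp hs).resolve_left hs0)

lemma toHull_zsmul (c : ℤ) (g : G) : toHull (c • g) = (c : ℚ) • toHull g := by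
  rw [toHull_eq, map_smul, ← toHull_eq, Int.cast_smul_eq_zsmul]

lemma li_up {ι : Type*} {v : ι → G} (h : LinearIndependent ℤ v) :
    LinearIndependent ℚ (fun i => toHull (v i)) :=
  h.of_isLocalizedModule ℚ (nonZeroDivisors ℤ) (hullMap G)

lemma li_down {ι : Type*} {v : ι → G} (h : LinearIndependent ℚ (fun i => toHull (v i))) :
    LinearIndependent ℤ v := by
  have h2 : LinearIndependent ℤ (fun i => toHull (v i)) :=
    h.restrict_scalars (R := ℤ) (by intro x y hxy; simpa using hxy)
  exact h2.of_comp (hullMap G)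

lemma span_toHull_top : Submodule.span ℚ (Set.range (toHull (G := G))) = ⊤ := by
  have := span_eq_top_of_isLocalizedModule ℚ (nonZeroDivisors ℤ) (hullMap G)
    (v := Set.univ) (by simp)
  rwa [Set.image_univ] at this

lemma clear_denoms {ι : Type*} [Fintype ι] (c : ι → ℚ) :
    ∃ d : ℤ, d ≠ 0 ∧ ∃ nn : ι → ℤ, ∀ i, (nn i : ℚ) = d * c i := by
  obtain ⟨b, hb⟩ := IsLocalization.exist_integer_multiples_of_finite (nonZeroDivisors ℤ) c
  refine ⟨(b : ℤ), nonZeroDivisors.coe_ne_zero b, fun i => (hb i).choose, fun i => ?_⟩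
  have := (hb i).choose_spec
  simpa [Submonoid.smul_def, zsmul_eq_mul, eq_comm] using this.symm

lemma smul_sum_toHull {ι : Type*} [Fintype ι] (d : ℤ) (nn : ι → ℤ) (c : ι → ℚ)
    (h : ∀ i, (nn i : ℚ) = d * c i) (x : ι → G) :
    (d : ℚ) • ∑ i, c i • toHull (x i) = toHull (∑ i, nn i • x i) := by
  rw [toHull_eq, map_sum, Finset.smul_sum]
  refine Finset.sum_congr rfl fun i _ => ?_
  rw [map_smul, ← toHull_eq, smul_smul, ← h i, Int.cast_smul_eq_zsmul]

lemma exists_smul_toHull_of_mem_span (A : AddSubgroup G) {v : ℚ ⊗[ℤ] G}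
    (hv : v ∈ Submodule.span ℚ (toHull '' (A : Set G))) :
    ∃ c : ℤ, c ≠ 0 ∧ ∃ x ∈ A, (c : ℚ) • v = toHull x := by
  obtain ⟨n, c, y, hy⟩ := Submodule.mem_span_set'.mp hv
  have hpre : ∀ i : Fin n, ∃ g, g ∈ A ∧ toHull g = (y i : ℚ ⊗[ℤ] G) := by
    intro i
    obtain ⟨g, hg, hg'⟩ := (y i).2
    exact ⟨g, hg, hg'⟩
  choose g hgA hgeq using hpre
  obtain ⟨d, hd, nn, hnn⟩ := clear_denoms c
  refine ⟨d, hd, ∑ i, nn i • g i, sum_mem fun i _ => zsmul_mem (hgA i) _, ?_⟩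
  rw [← smul_sum_toHull d nn c hnn g]
  congr 1
  rw [← hy]
  exact Finset.sum_congr rfl fun i _ => by rw [hgeq]

end Aux

theorem decomposable_iff_basis_property {G : Type*} [AddCommGroup G]
    [NoZeroSMulDivisors ℤ G]
    (hfin : Module.rank ℚ (ℚ ⊗[ℤ] G) < Cardinal.aleph0) :
    (∃ A B : AddSubgroup G, A ≠ ⊥ ∧ B ≠ ⊥ ∧ A ⊔ B = ⊤ ∧ A ⊓ B = ⊥) ↔
    (∃ (n m : ℕ) (a : Fin n → G) (b : Fin m → G), 0 < n ∧ 0 < m ∧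
      LinearIndependent ℤ (Sum.elim a b) ∧
      (∀ g : G, ∃ c : ℤ, c ≠ 0 ∧
        c • g ∈ Submodule.span ℤ (Set.range a ∪ Set.range b)) ∧
      (∀ (q : Fin n → ℚ) (r : Fin m → ℚ),
        (∑ i, q i • toHull (a i) + ∑ j, r j • toHull (b j)) ∈ Set.range (toHull (G := G)) →
        (∑ i, q i • toHull (a i)) ∈ Set.range (toHull (G := G)))) := by
  constructor
  · -- forward direction
    rintro ⟨A, B, hA, hB, hsup, hinf⟩
    have hfd : Module.Finite ℚ (ℚ ⊗[ℤ] G) := Module.rank_lt_aleph0_iff.mp hfin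
    set VA := Submodule.span ℚ (toHull '' (A : Set G)) with hVAdef
    set VB := Submodule.span ℚ (toHull '' (B : Set G)) with hVBdef
    have hdisj : ∀ v : ℚ ⊗[ℤ] G, v ∈ VA → v ∈ VB → v = 0 := by
      intro v h1 h2
      obtain ⟨c, hc, x, hxA, hx⟩ := exists_smul_toHull_of_mem_span A h1
      obtain ⟨d, hd, y, hyB, hy⟩ := exists_smul_toHull_of_mem_span B h2
      have heq : toHull (d • x) = toHull (c • y) := by
        rw [toHull_zsmul, toHull_zsmul, ← hx, ← hy, smul_smul, smul_smul, mul_comm]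
      have hxy : d • x = c • y := toHull_injective heq
      have hmem : d • x ∈ A ⊓ B := by
        refine ⟨zsmul_mem hxA _, ?_⟩
        rw [hxy]; exact zsmul_mem hyB _
      rw [hinf, AddSubgroup.mem_bot] at hmem
      have hx0 : x = 0 := (smul_eq_zero.mp hmem).resolve_left hd
      have : (c : ℚ) • v = 0 := by rw [hx, hx0, toHull_eq, map_zero]
      exact (smul_eq_zero.mp this).resolve_left (by exact_mod_cast hc)
    -- pick bases inside the images
    obtain ⟨s, hsubA, hspanA, hliA⟩ := exists_linearIndependent ℚ (toHull '' (A : Set G))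
    obtain ⟨t, hsubB, hspanB, hliB⟩ := exists_linearIndependent ℚ (toHull '' (B : Set G))
    have hsfin : s.Finite := hliA.setFinite
    have htfin : t.Finite := hliB.setFinite
    haveI := hsfin.fintype
    haveI := htfin.fintype
    obtain ⟨e⟩ : Nonempty (s ≃ Fin (Fintype.card s)) := ⟨Fintype.equivFin s⟩
    obtain ⟨f⟩ : Nonempty (t ≃ Fin (Fintype.card t)) := ⟨Fintype.equivFin t⟩
    set n := Fintype.card s
    set m := Fintype.card t
    set a' : Fin n → ℚ ⊗[ℤ] G := fun i => ((e.symm i : s) : ℚ ⊗[ℤ] G) with ha'def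
    set b' : Fin m → ℚ ⊗[ℤ] G := fun j => ((f.symm j : t) : ℚ ⊗[ℤ] G) with hb'def
    have hrangea' : Set.range a' = s := by
      ext x
      constructor
      · rintro ⟨i, rfl⟩; exact (e.symm i).2
      · intro hx; exact ⟨e ⟨x, hx⟩, by simp [ha'def]⟩
    have hrangeb' : Set.range b' = t := by
      ext x
      constructor
      · rintro ⟨j, rfl⟩; exact (f.symm j).2
      · intro hx; exact ⟨f ⟨x, hx⟩, by simp [hb'def]⟩
    have hlia' : LinearIndependent ℚ a' := hliA.comp e.symm e.symm.injective
    have hlib' : LinearIndependent ℚ b' := hliB.comp f.symm f.symm.injective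
    have hspa' : Submodule.span ℚ (Set.range a') = VA := by rw [hrangea', hspanA]
    have hspb' : Submodule.span ℚ (Set.range b') = VB := by rw [hrangeb', hspanB]
    -- choose preimages
    have hprea : ∀ i : Fin n, ∃ g, g ∈ A ∧ toHull g = a' i := by
      intro i
      obtain ⟨g, hg, hg'⟩ := hsubA (e.symm i).2
      exact ⟨g, hg, hg'⟩
    have hpreb : ∀ j : Fin m, ∃ g, g ∈ B ∧ toHull g = b' j := by
      intro j
      obtain ⟨g, hg, hg'⟩ := hsubB (f.symm j).2
      exact ⟨g, hg, hg'⟩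
    choose aa haA haeq using hprea
    choose bb hbB hbeq using hpreb
    -- nonzero elements in A and B
    have hexA : ∃ x ∈ A, x ≠ 0 := by
      by_contra hcon
      push_neg at hcon
      exact hA ((AddSubgroup.eq_bot_iff_forall _).mpr hcon)
    have hexB : ∃ x ∈ B, x ≠ 0 := by
      by_contra hcon
      push_neg at hcon
      exact hB ((AddSubgroup.eq_bot_iff_forall _).mpr hcon)
    have hVAne : VA ≠ ⊥ := by
      obtain ⟨x, hxA, hx0⟩ := hexA
      intro hbot
      have : toHull x ∈ VA := Submodule.subset_span ⟨x, hxA, rfl⟩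
      rw [hbot, Submodule.mem_bot] at this
      exact hx0 (toHull_injective (by rw [this, toHull_eq, map_zero]))
    have hVBne : VB ≠ ⊥ := by
      obtain ⟨x, hxB, hx0⟩ := hexB
      intro hbot
      have : toHull x ∈ VB := Submodule.subset_span ⟨x, hxB, rfl⟩
      rw [hbot, Submodule.mem_bot] at this
      exact hx0 (toHull_injective (by rw [this, toHull_eq, map_zero]))
    have hn : 0 < n := by
      rcases Nat.eq_zero_or_pos n with h0 | h
      · exfalso
        apply hVAne
        rw [← hspa']
        have : Set.range a' = ∅ := by
          rw [Set.range_eq_empty_iff]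
          exact ⟨fun i => absurd i.2 (by omega)⟩
        rw [this, Submodule.span_empty]
      · exact h
    have hm : 0 < m := by
      rcases Nat.eq_zero_or_pos m with h0 | h
      · exfalso
        apply hVBne
        rw [← hspb']
        have : Set.range b' = ∅ := by
          rw [Set.range_eq_empty_iff]
          exact ⟨fun j => absurd j.2 (by omega)⟩
        rw [this, Submodule.span_empty]
      · exact h
    -- disjointness of the spans
    have hdisj' : Disjoint (Submodule.span ℚ (Set.range a')) (Submodule.span ℚ (Set.range b')) := by
      rw [Submodule.disjoint_def]
      intro x hx1 hx2
      exact hdisj x (hspa' ▸ hx1) (hspb' ▸ hx2)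
    have hliSum : LinearIndependent ℚ (Sum.elim a' b') := hlia'.sum_type hlib' hdisj'
    have hliab : LinearIndependent ℤ (Sum.elim aa bb) := by
      apply li_down
      have : (fun k => toHull (Sum.elim aa bb k)) = Sum.elim a' b' := by
        funext k
        cases k with
        | inl i => simp [haeq]
        | inr j => simp [hbeq]
      rw [this]
      exact hliSum
    -- the sup is everything
    have hsupV : VA ⊔ VB = ⊤ := by
      rw [eq_top_iff, ← span_toHull_top (G := G), Submodule.span_le]
      rintro _ ⟨g, rfl⟩
      have : g ∈ A ⊔ B := by rw [hsup]; trivial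
      obtain ⟨x, hx, y, hy, hxy⟩ := AddSubgroup.mem_sup.mp this
      have : toHull g = toHull x + toHull y := by
        rw [← hxy, toHull_eq, toHull_eq, toHull_eq, map_add]
      rw [this]
      exact Submodule.add_mem _
        (Submodule.mem_sup_left (Submodule.subset_span ⟨x, hx, rfl⟩))
        (Submodule.mem_sup_right (Submodule.subset_span ⟨y, hy, rfl⟩))
    refine ⟨n, m, aa, bb, hn, hm, hliab, ?_, ?_⟩
    · -- spanning up to torsion
      intro g
      have hg : toHull g ∈ Submodule.span ℚ (Set.range (Sum.elim a' b')) := by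
        rw [Set.Sum.elim_range, Submodule.span_union, hspa', hspb', hsupV]
        trivial
      obtain ⟨cc, hcc⟩ := (Submodule.mem_span_range_iff_exists_fun ℚ).mp hg
      obtain ⟨d, hd, nn, hnn⟩ := clear_denoms cc
      refine ⟨d, hd, ?_⟩
      have helim : ∀ k, Sum.elim a' b' k = toHull (Sum.elim aa bb k) := by
        rintro (i | j)
        · simp [haeq]
        · simp [hbeq]
      have hsum : (d : ℚ) • toHull g = toHull (∑ k, nn k • Sum.elim aa bb k) := by
        rw [← hcc]
        calc (d : ℚ) • ∑ k, cc k • Sum.elim a' b' k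
            = (d : ℚ) • ∑ k, cc k • toHull (Sum.elim aa bb k) := by simp_rw [helim]
          _ = toHull (∑ k, nn k • Sum.elim aa bb k) := smul_sum_toHull d nn cc hnn _
      rw [← toHull_zsmul] at hsum
      have hdg : d • g = ∑ k, nn k • Sum.elim aa bb k := toHull_injective hsum
      rw [hdg]
      refine sum_mem fun k _ => zsmul_mem (Submodule.subset_span ?_) _
      cases k with
      | inl i => exact Or.inl ⟨i, rfl⟩
      | inr j => exact Or.inr ⟨j, rfl⟩
    · -- the key property
      intro q r hmem
      obtain ⟨g, hg⟩ := hmem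
      have hgAB : g ∈ A ⊔ B := by rw [hsup]; trivial
      obtain ⟨x, hx, y, hy, hxy⟩ := AddSubgroup.mem_sup.mp hgAB
      have hsplit : toHull x + toHull y = ∑ i, q i • toHull (aa i) + ∑ j, r j • toHull (bb j) := by
        rw [← hg, ← hxy, toHull_eq, toHull_eq, toHull_eq, map_add]
      have hqa : (∑ i, q i • toHull (aa i)) ∈ VA :=
        sum_mem fun i _ => Submodule.smul_mem _ _ (Submodule.subset_span ⟨aa i, haA i, rfl⟩)
      have hrb : (∑ j, r j • toHull (bb j)) ∈ VB :=
        sum_mem fun j _ => Submodule.smul_mem _ _ (Submodule.subset_span ⟨bb j, hbB j, rfl⟩)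
      have hxVA : toHull x ∈ VA := Submodule.subset_span ⟨x, hx, rfl⟩
      have hyVB : toHull y ∈ VB := Submodule.subset_span ⟨y, hy, rfl⟩
      have hwA : (∑ i, q i • toHull (aa i)) - toHull x ∈ VA := sub_mem hqa hxVA
      have hwB : (∑ i, q i • toHull (aa i)) - toHull x ∈ VB := by
        have : (∑ i, q i • toHull (aa i)) - toHull x
            = toHull y - ∑ j, r j • toHull (bb j) := by
          rw [sub_eq_sub_iff_add_eq_add, ← hsplit]
          abel
        rw [this]
        exact sub_mem hyVB hrb
      have hw0 := hdisj _ hwA hwB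
      refine ⟨x, ?_⟩
      have := sub_eq_zero.mp hw0
      rw [this]
  · -- backward direction
    rintro ⟨n, m, a, b, hn, hm, hli, hspan, hkey⟩
    set VA := Submodule.span ℚ (Set.range fun i => toHull (a i)) with hVAdef
    set VB := Submodule.span ℚ (Set.range fun j => toHull (b j)) with hVBdef
    refine ⟨(VA.toAddSubgroup.comap (hullMap G).toAddMonoidHom),
            (VB.toAddSubgroup.comap (hullMap G).toAddMonoidHom), ?_, ?_, ?_, ?_⟩
    · -- A ≠ ⊥
      intro hbot
      have ha0 : a ⟨0, hn⟩ ≠ 0 := by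
        have := hli.ne_zero (Sum.inl ⟨0, hn⟩)
        simpa using this
      apply ha0
      refine (AddSubgroup.eq_bot_iff_forall _).mp hbot _ ?_
      show hullMap G (a ⟨0, hn⟩) ∈ VA
      exact Submodule.subset_span ⟨⟨0, hn⟩, rfl⟩
    · -- B ≠ ⊥
      intro hbot
      have hb0 : b ⟨0, hm⟩ ≠ 0 := by
        have := hli.ne_zero (Sum.inr ⟨0, hm⟩)
        simpa using this
      apply hb0
      refine (AddSubgroup.eq_bot_iff_forall _).mp hbot _ ?_
      show hullMap G (b ⟨0, hm⟩) ∈ VB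
      exact Submodule.subset_span ⟨⟨0, hm⟩, rfl⟩
    · -- sup = ⊤
      rw [AddSubgroup.eq_top_iff']
      intro g
      obtain ⟨c, hc, hcg⟩ := hspan g
      have h2 : toHull (c • g) ∈ VA ⊔ VB := by
        have h3 : hullMap G (c • g) ∈
            Submodule.map (hullMap G) (Submodule.span ℤ (Set.range a ∪ Set.range b)) :=
          Submodule.mem_map_of_mem hcg
        rw [Submodule.map_span] at h3
        have himg : (hullMap G) '' (Set.range a ∪ Set.range b)
            = (Set.range fun i => toHull (a i)) ∪ (Set.range fun j => toHull (b j)) := by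
          rw [Set.image_union, ← Set.range_comp, ← Set.range_comp]
          rfl
        rw [himg] at h3
        have h4 := Submodule.span_subset_span ℤ ℚ _ h3
        rw [Submodule.span_union] at h4
        exact h4
      have h1 : toHull g ∈ VA ⊔ VB := by
        have : toHull g = (c : ℚ)⁻¹ • toHull (c • g) := by
          rw [toHull_zsmul, smul_smul, inv_mul_cancel₀ (by exact_mod_cast hc), one_smul]
        rw [this]
        exact Submodule.smul_mem _ _ h2
      obtain ⟨u, hu, w, hw, huw⟩ := Submodule.mem_sup.mp h1
      obtain ⟨q, hq⟩ := (Submodule.mem_span_range_iff_exists_fun ℚ).mp hu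
      obtain ⟨r, hr⟩ := (Submodule.mem_span_range_iff_exists_fun ℚ).mp hw
      have hmem : (∑ i, q i • toHull (a i) + ∑ j, r j • toHull (b j))
          ∈ Set.range (toHull (G := G)) := ⟨g, by rw [hq, hr, huw]⟩
      obtain ⟨g₁, hg₁⟩ := hkey q r hmem
      rw [AddSubgroup.mem_sup]
      refine ⟨g₁, ?_, g - g₁, ?_, by abel⟩
      · show hullMap G g₁ ∈ VA
        rw [← toHull_eq, hg₁, hq]
        exact hu
      · show hullMap G (g - g₁) ∈ VB
        rw [map_sub, ← toHull_eq, ← toHull_eq, hg₁, hq]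
        have : toHull g = u + w := huw.symm
        rw [this]
        have : u + w - u = w := by abel
        rw [this]
        exact hw
    · -- inf = ⊥
      rw [AddSubgroup.eq_bot_iff_forall]
      intro g hg
      obtain ⟨hgA, hgB⟩ := AddSubgroup.mem_inf.mp hg
      have h1 : toHull g ∈ VA := hgA
      have h2 : toHull g ∈ VB := hgB
      obtain ⟨q, hq⟩ := (Submodule.mem_span_range_iff_exists_fun ℚ).mp h1
      obtain ⟨r, hr⟩ := (Submodule.mem_span_range_iff_exists_fun ℚ).mp h2
      have hQ' : LinearIndependent ℚ (Sum.elim (fun i => toHull (a i)) (fun j => toHull (b j))) := by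
        have hQ : LinearIndependent ℚ (fun k => toHull (Sum.elim a b k)) := li_up hli
        have : (fun k => toHull (Sum.elim a b k))
            = Sum.elim (fun i => toHull (a i)) (fun j => toHull (b j)) := by
          funext k; cases k <;> rfl
        rwa [this] at hQ
      have hz : ∑ k, (Sum.elim q (fun j => -(r j))) k •
          (Sum.elim (fun i => toHull (a i)) (fun j => toHull (b j))) k = 0 := by
        rw [Fintype.sum_sum_type]
        simp only [Sum.elim_inl, Sum.elim_inr, neg_smul]
        rw [Finset.sum_neg_distrib, hq, hr]
        abel
      have hcoef := Fintype.linearIndependent_iff.mp hQ' _ hz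
      have hq0 : ∀ i, q i = 0 := fun i => hcoef (Sum.inl i)
      have : toHull g = 0 := by
        rw [← hq]
        apply Finset.sum_eq_zero
        intro i _
        rw [hq0 i, zero_smul]
      exact toHull_injective (by rw [this, toHull_eq, map_zero])
end

section
/- Define G ⊆ ℚ² as the subgroup generated by g₁ = (1,0), g₂ = (0,1), (g₁+g₂)/2, g₁/p for all odd-indexed primes p (p₁ = 3, p₃ = 7, ...), and g₂/p for all even-indexed primes p ≥ 5 (p₂ = 5, p₄ = 11, ...). Then G is indecomposable. -/
/-- `nthPrime i` is the `i`-th prime: `nthPrime 0 = 2`, `nthPrime 1 = 3`, ... -/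
noncomputable def nthPrime (i : ℕ) : ℕ := Nat.nth Nat.Prime i

/-- The base group of Theorem 5.2. -/
noncomputable def baseGroup : AddSubgroup (ℚ × ℚ) :=
  AddSubgroup.closure
    ({((1 : ℚ), (0 : ℚ)), ((0 : ℚ), (1 : ℚ)), ((1/2 : ℚ), (1/2 : ℚ))} ∪
      {x | ∃ k : ℕ, x = ((1 / (nthPrime (2 * k + 1)) : ℚ), (0 : ℚ))} ∪
      {x | ∃ k : ℕ, x = ((0 : ℚ), (1 / (nthPrime (2 * k + 2)) : ℚ))})

/-!
Let `G = A ⊕ B`. The vector `e₁ = (1, 0)` is divisible in `G` by infinitely many primes `p`, none of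
which divides the denominator of a second coordinate of an element of `G`. The components of `e₁`
in `A` and `B` inherit this divisibility, so their second coordinates vanish; being proportional,
one of them is `0`, i.e. `e₁ ∈ A` or `e₁ ∈ B`. The same holds for `e₂ = (0, 1)`. If `e₁` and `e₂`
lie in the same summand, every element of `G` has a nonzero multiple there, so the other summand is
trivial. If they lie in different summands, `2 • (1/2, 1/2) = e₁ + e₂` makes `e₁` divisible by `2`
in `G`, but `(1/2, 0) ∉ G` because the coordinates of elements of `G` differ by a rational of odd
denominator.
-/

open AddSubgroup

section Complement

variable {M : Type*} [AddCommGroup M] {A B : AddSubgroup M}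

theorem AddSubgroup.eq_of_add_eq_add_of_disjoint (hAB : Disjoint A B) {a a' b b' : M}
    (ha : a ∈ A) (ha' : a' ∈ A) (hb : b ∈ B) (hb' : b' ∈ B) (h : a + b = a' + b') : a = a' := by
  have hab : a - a' = b' - b := by rw [sub_eq_sub_iff_add_eq_add, h, add_comm]
  exact sub_eq_zero.1 <| disjoint_def.1 hAB (sub_mem ha ha') (hab ▸ sub_mem hb' hb)

/-- The projection onto a direct summand is a homomorphism, so it preserves divisibility. -/
theorem AddSubgroup.exists_zsmul_eq_of_add_eq_zsmul (hAB : IsCompl A B) {a b u : M} {n : ℤ}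
    (ha : a ∈ A) (hb : b ∈ B) (h : a + b = n • u) : ∃ w, n • w = a := by
  obtain ⟨v, hv, w, hw, rfl⟩ := mem_sup.1 (hAB.sup_eq_top ▸ mem_top u)
  refine ⟨v, eq_of_add_eq_add_of_disjoint hAB.disjoint (zsmul_mem hv n) ha (zsmul_mem hw n) hb ?_⟩
  rw [← smul_add, h]

theorem AddSubgroup.eq_zero_of_zsmul_mem [IsAddTorsionFree M] (hAB : Disjoint A B) {a : M} {n : ℤ}
    (hn : n ≠ 0) (ha : a ∈ A) (hna : n • a ∈ B) : a = 0 :=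
  (IsAddTorsionFree.zsmul_eq_zero_iff_right hn).1 (disjoint_def.1 hAB (zsmul_mem ha n) hna)

end Complement

section RationalVectorSpace

variable {V : Type*} [AddCommGroup V] [Module ℚ V] {H : AddSubgroup V} {A B : AddSubgroup H}

theorem Rat.den_zsmul_smul (q : ℚ) (x : V) : (q.den : ℤ) • q • x = q.num • x := by
  rw [← Int.cast_smul_eq_zsmul ℚ, ← Int.cast_smul_eq_zsmul ℚ, smul_smul, Int.cast_natCast,
    Rat.den_mul_eq_num]

theorem AddSubgroup.eq_zero_of_coe_eq_smul_add_smul (hAB : Disjoint A B) {a e₁ e₂ : H}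
    (ha : a ∈ A) (he₁ : e₁ ∈ B) (he₂ : e₂ ∈ B) {q r : ℚ}
    (h : (a : V) = q • (e₁ : V) + r • (e₂ : V)) : a = 0 := by
  have := IsAddTorsionFree.of_module_rat V
  refine eq_zero_of_zsmul_mem hAB (n := q.den * r.den) (by positivity) ha ?_
  have hclear : ((q.den * r.den : ℤ) • a : H) = (q.num * r.den) • e₁ + (r.num * q.den) • e₂ := by
    ext
    simp only [coe_add, coe_zsmul, h, smul_add, mul_smul, Rat.den_zsmul_smul]
    rw [smul_comm (q.den : ℤ) (r.den : ℤ), Rat.den_zsmul_smul, smul_comm (r.den : ℤ),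
      smul_comm (q.den : ℤ)]
  rw [hclear]
  exact add_mem (zsmul_mem he₁ _) (zsmul_mem he₂ _)

theorem AddSubgroup.eq_zero_of_coe_eq_smul (hAB : Disjoint A B) {a b : H} (ha : a ∈ A) (hb : b ∈ B)
    {q : ℚ} (h : (a : V) = q • (b : V)) : a = 0 :=
  eq_zero_of_coe_eq_smul_add_smul hAB ha hb hb (q := q) (r := 0) (by simp [h])

theorem AddSubgroup.eq_bot_of_span_eq_top (hAB : Disjoint A B) {e₁ e₂ : H} (he₁ : e₁ ∈ A)
    (he₂ : e₂ ∈ A) (hspan : Submodule.span ℚ {(e₁ : V), (e₂ : V)} = ⊤) : B = ⊥ := by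
  refine (eq_bot_iff_forall B).2 fun b hb => ?_
  obtain ⟨q, r, hqr⟩ := Submodule.mem_span_pair.1 (hspan ▸ Submodule.mem_top : (b : V) ∈ _)
  exact eq_zero_of_coe_eq_smul_add_smul hAB.symm hb he₁ he₂ hqr.symm

/-- The components of `g` are divisible like `g`, hence proportional, so one of them vanishes. -/
theorem AddSubgroup.mem_or_mem_of_forall_dvd (hAB : IsCompl A B) {ι : Type*} (n : ι → ℤ) {g : H}
    (hg : ∀ i, ∃ u, n i • u = g)
    (hline : ∀ x : H, (∀ i, ∃ u, n i • u = x) → (x : V) ∈ ℚ ∙ (g : V)) : g ∈ A ∨ g ∈ B := by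
  obtain ⟨a, ha, b, hb, rfl⟩ := mem_sup.1 (hAB.sup_eq_top ▸ mem_top g)
  have ha_dvd : ∀ i, ∃ w, n i • w = a := fun i => by
    obtain ⟨u, hu⟩ := hg i
    exact exists_zsmul_eq_of_add_eq_zsmul hAB ha hb hu.symm
  have hb_dvd : ∀ i, ∃ w, n i • w = b := fun i => by
    obtain ⟨u, hu⟩ := hg i
    exact exists_zsmul_eq_of_add_eq_zsmul hAB.symm hb ha (by rw [add_comm, hu])
  obtain ⟨s, hs⟩ := Submodule.mem_span_singleton.1 (hline a ha_dvd)
  obtain ⟨r, hr⟩ := Submodule.mem_span_singleton.1 (hline b hb_dvd)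
  rcases eq_or_ne b 0 with rfl | hb0
  · exact Or.inl (by simpa using ha)
  have hr0 : r ≠ 0 := by
    rintro rfl
    exact hb0 (Subtype.ext (by simpa using hr.symm))
  have ha0 : a = 0 := eq_zero_of_coe_eq_smul hAB.disjoint ha hb (q := s / r) <| by
    rw [← hs, ← hr, smul_smul, div_mul_cancel₀ s hr0]
  exact Or.inr (by simpa [ha0] using hb)

end RationalVectorSpace

namespace Rat

def pIntegral {p : ℕ} (hp : p.Prime) : AddSubgroup ℚ where
  carrier := {x | ¬ p ∣ x.den}
  zero_mem' := by simpa using hp.ne_one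
  add_mem' {x y} hx hy hxy := (hp.dvd_mul.1 (hxy.trans (Rat.add_den_dvd x y))).elim hx hy
  neg_mem' := by simp

section

variable {p : ℕ} (hp : p.Prime)

theorem mem_pIntegral {x : ℚ} : x ∈ pIntegral hp ↔ ¬ p ∣ x.den := Iff.rfl

theorem one_mem_pIntegral : (1 : ℚ) ∈ pIntegral hp := by simpa [mem_pIntegral] using hp.ne_one

theorem one_div_mem_pIntegral {q : ℕ} (hq : q.Prime) (hpq : p ≠ q) :
    1 / (q : ℚ) ∈ pIntegral hp := by
  rw [mem_pIntegral, one_div, Rat.inv_natCast_den_of_pos hq.pos]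
  exact fun h => hpq ((Nat.prime_dvd_prime_iff_eq hp hq).1 h)

theorem prime_dvd_num_mul_of_mem_pIntegral {z : ℚ} (hz : z ∈ pIntegral hp) :
    (p : ℤ) ∣ ((p : ℚ) * z).num := by
  set x := (p : ℚ) * z
  have hcross : x.num * z.den = p * z.num * x.den := by
    have : (x.num : ℚ) * z.den = p * z.num * x.den := by
      rw [← Rat.mul_den_eq_num x, ← Rat.mul_den_eq_num z]
      ring
    exact_mod_cast this
  have hdvd : (p : ℤ) ∣ x.num * z.den := ⟨z.num * x.den, by rw [hcross]; ring⟩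
  rcases (Nat.prime_iff_prime_int.1 hp).dvd_mul.1 hdvd with h | h
  · exact h
  · exact absurd (Int.natCast_dvd_natCast.1 h) hz

end

/-- Taking `k = |x.num|`, the prime `p k > k` divides `x.num`. -/
theorem eq_zero_of_forall_eq_mul_mem_pIntegral {x : ℚ} (p : ℕ → ℕ) (hp : ∀ k, (p k).Prime)
    (hk : ∀ k, k < p k) (h : ∀ k, ∃ z ∈ pIntegral (hp k), x = p k * z) : x = 0 := by
  by_contra hx
  set k := x.num.natAbs
  obtain ⟨z, hz, hxz⟩ := h k
  have hdvd : (p k : ℤ) ∣ x.num := by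
    rw [hxz]
    exact prime_dvd_num_mul_of_mem_pIntegral (hp k) hz
  have := Nat.le_of_dvd (Int.natAbs_pos.2 (Rat.num_ne_zero.2 hx)) (Int.natCast_dvd.1 hdvd)
  exact absurd (hk k) (not_lt.2 this)

end Rat

theorem nthPrime_prime (i : ℕ) : (nthPrime i).Prime := Nat.prime_nth_prime i

theorem lt_nthPrime (i : ℕ) : i < nthPrime i := by
  have := Nat.add_two_le_nth_prime i
  unfold nthPrime
  omega

theorem nthPrime_ne_two {i : ℕ} (hi : i ≠ 0) : nthPrime i ≠ 2 := by
  have := Nat.add_two_le_nth_prime i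
  unfold nthPrime
  omega

theorem nthPrime_injective : Function.Injective nthPrime :=
  Nat.nth_injective Nat.infinite_setOfPred_prime

namespace baseGroup

open Rat

theorem apply_mem_of_mem {f : ℚ × ℚ →+ ℚ} {S : AddSubgroup ℚ} (h₁ : f (1, 0) ∈ S)
    (h₂ : f (0, 1) ∈ S) (hhalf : f (1 / 2, 1 / 2) ∈ S)
    (hodd : ∀ k, f (1 / nthPrime (2 * k + 1), 0) ∈ S)
    (heven : ∀ k, f (0, 1 / nthPrime (2 * k + 2)) ∈ S) {x : ℚ × ℚ} (hx : x ∈ baseGroup) :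
    f x ∈ S := by
  refine (closure_le (S.comap f)).2 ?_ hx
  rintro x (((rfl | rfl | rfl) | ⟨k, rfl⟩) | ⟨k, rfl⟩)
  exacts [h₁, h₂, hhalf, hodd k, heven k]

theorem snd_mem_pIntegral (k : ℕ) {x : ℚ × ℚ} (hx : x ∈ baseGroup) :
    x.2 ∈ pIntegral (nthPrime_prime (2 * k + 1)) := by
  refine apply_mem_of_mem (f := AddMonoidHom.snd ℚ ℚ) ?_ ?_ ?_ (fun _ => ?_) (fun _ => ?_) hx
  all_goals simp only [AddMonoidHom.coe_snd]
  · exact zero_mem _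
  · exact one_mem_pIntegral _
  · simpa using one_div_mem_pIntegral _ Nat.prime_two (nthPrime_ne_two (by omega))
  · exact zero_mem _
  · exact one_div_mem_pIntegral _ (nthPrime_prime _) (nthPrime_injective.ne (by omega))

theorem fst_mem_pIntegral (k : ℕ) {x : ℚ × ℚ} (hx : x ∈ baseGroup) :
    x.1 ∈ pIntegral (nthPrime_prime (2 * k + 2)) := by
  refine apply_mem_of_mem (f := AddMonoidHom.fst ℚ ℚ) ?_ ?_ ?_ (fun _ => ?_) (fun _ => ?_) hx
  all_goals simp only [AddMonoidHom.coe_fst]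
  · exact one_mem_pIntegral _
  · exact zero_mem _
  · simpa using one_div_mem_pIntegral _ Nat.prime_two (nthPrime_ne_two (by omega))
  · exact one_div_mem_pIntegral _ (nthPrime_prime _) (nthPrime_injective.ne (by omega))
  · exact zero_mem _

theorem fst_sub_snd_mem_pIntegral {x : ℚ × ℚ} (hx : x ∈ baseGroup) :
    x.1 - x.2 ∈ pIntegral Nat.prime_two := by
  refine apply_mem_of_mem (f := AddMonoidHom.fst ℚ ℚ - AddMonoidHom.snd ℚ ℚ) ?_ ?_ ?_ (fun _ => ?_)
    (fun _ => ?_) hx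
  all_goals simp only [AddMonoidHom.sub_apply, AddMonoidHom.coe_fst, AddMonoidHom.coe_snd,
    sub_zero, zero_sub, sub_self, neg_mem_iff]
  · exact one_mem_pIntegral _
  · exact one_mem_pIntegral _
  · exact zero_mem _
  all_goals exact one_div_mem_pIntegral _ (nthPrime_prime _) (nthPrime_ne_two (by omega)).symm

def e₁ : baseGroup := ⟨(1, 0), subset_closure (by simp)⟩

def e₂ : baseGroup := ⟨(0, 1), subset_closure (by simp)⟩

theorem span_e₁_e₂ : Submodule.span ℚ {(e₁ : ℚ × ℚ), (e₂ : ℚ × ℚ)} = ⊤ :=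
  eq_top_iff.2 fun x _ => Submodule.mem_span_pair.2 ⟨x.1, x.2, by ext <;> simp [e₁, e₂]⟩

theorem snd_eq_zero_of_forall_dvd {x : baseGroup}
    (h : ∀ k, ∃ u : baseGroup, (nthPrime (2 * k + 1) : ℤ) • u = x) : (x : ℚ × ℚ).2 = 0 := by
  refine eq_zero_of_forall_eq_mul_mem_pIntegral _ (fun k => nthPrime_prime (2 * k + 1))
    (fun k => (lt_nthPrime _).trans' (by omega)) fun k => ?_
  obtain ⟨u, rfl⟩ := h k
  exact ⟨_, snd_mem_pIntegral k u.2, by simp⟩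

theorem fst_eq_zero_of_forall_dvd {x : baseGroup}
    (h : ∀ k, ∃ u : baseGroup, (nthPrime (2 * k + 2) : ℤ) • u = x) : (x : ℚ × ℚ).1 = 0 := by
  refine eq_zero_of_forall_eq_mul_mem_pIntegral _ (fun k => nthPrime_prime (2 * k + 2))
    (fun k => (lt_nthPrime _).trans' (by omega)) fun k => ?_
  obtain ⟨u, rfl⟩ := h k
  exact ⟨_, fst_mem_pIntegral k u.2, by simp⟩

variable {A B : AddSubgroup baseGroup}

theorem e₁_mem_or_mem (hAB : IsCompl A B) : e₁ ∈ A ∨ e₁ ∈ B := by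
  refine mem_or_mem_of_forall_dvd hAB (fun k => (nthPrime (2 * k + 1) : ℤ)) (fun k => ?_)
    fun x hx => Submodule.mem_span_singleton.2 ⟨(x : ℚ × ℚ).1, ?_⟩
  · refine ⟨⟨(1 / nthPrime (2 * k + 1), 0), subset_closure (.inl (.inr ⟨k, rfl⟩))⟩, ?_⟩
    ext <;> simp [e₁, (nthPrime_prime _).ne_zero]
  · ext <;> simp [e₁, snd_eq_zero_of_forall_dvd hx]

theorem e₂_mem_or_mem (hAB : IsCompl A B) : e₂ ∈ A ∨ e₂ ∈ B := by
  refine mem_or_mem_of_forall_dvd hAB (fun k => (nthPrime (2 * k + 2) : ℤ)) (fun k => ?_)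
    fun x hx => Submodule.mem_span_singleton.2 ⟨(x : ℚ × ℚ).2, ?_⟩
  · refine ⟨⟨(0, 1 / nthPrime (2 * k + 2)), subset_closure (.inr ⟨k, rfl⟩)⟩, ?_⟩
    ext <;> simp [e₂, (nthPrime_prime _).ne_zero]
  · ext <;> simp [e₂, fst_eq_zero_of_forall_dvd hx]

/-- `(1/2, 0)` is not in the group: its coordinates differ by `1/2`. -/
theorem not_exists_two_zsmul_eq_e₁ : ¬ ∃ w : baseGroup, (2 : ℤ) • w = e₁ := by
  rintro ⟨w, hw⟩
  have h₁ : 2 * (w : ℚ × ℚ).1 = 1 := by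
    simpa [e₁] using congrArg (fun v : baseGroup => (v : ℚ × ℚ).1) hw
  have h₂ : 2 * (w : ℚ × ℚ).2 = 0 := by
    simpa [e₁] using congrArg (fun v : baseGroup => (v : ℚ × ℚ).2) hw
  have hw₁ : (w : ℚ × ℚ).1 - (w : ℚ × ℚ).2 = 1 / 2 := by linarith
  have := fst_sub_snd_mem_pIntegral w.2
  rw [hw₁, mem_pIntegral] at this
  exact this (by norm_num)

theorem e₂_notMem_of_e₁_mem (hAB : IsCompl A B) (h₁ : e₁ ∈ A) : e₂ ∉ B := fun h₂ =>
  not_exists_two_zsmul_eq_e₁ <| exists_zsmul_eq_of_add_eq_zsmul hAB h₁ h₂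
    (u := ⟨(1 / 2, 1 / 2), subset_closure (by simp)⟩) (by ext <;> norm_num [e₁, e₂])

end baseGroup

theorem baseGroup_indecomposable :
    ¬ ∃ A B : AddSubgroup baseGroup,
      A ≠ ⊥ ∧ B ≠ ⊥ ∧ A ⊔ B = ⊤ ∧ A ⊓ B = ⊥ := by
  rintro ⟨A, B, hA, hB, hsup, hinf⟩
  have hAB : IsCompl A B := .of_eq hinf hsup
  rcases baseGroup.e₁_mem_or_mem hAB with h₁ | h₁ <;>
    rcases baseGroup.e₂_mem_or_mem hAB with h₂ | h₂
  · exact hB (eq_bot_of_span_eq_top hAB.disjoint h₁ h₂ baseGroup.span_e₁_e₂)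
  · exact baseGroup.e₂_notMem_of_e₁_mem hAB h₁ h₂
  · exact baseGroup.e₂_notMem_of_e₁_mem hAB.symm h₁ h₂
  · exact hA (eq_bot_of_span_eq_top hAB.symm.disjoint h₁ h₂ baseGroup.span_e₁_e₂)
end

section
/- Let m be an odd positive integer and let G ⊆ ℚ² be the subgroup generated by g₁ = (1,0), g₂ = (0,1), (g₁+g₂)/2, g₁/p for each prime p in a finite set S of odd primes with product m, and g₂/p^k for every prime p ∉ S ∪ {2} and all k ≥ 1. Then G = A ⊕ B where A is the pure subgroup generated by a = (g₁ + m·g₂)/2 and B is the pure subgroup generated by g₂. -/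
/-- The group of Lemma 5.3, for a finite set `S` of odd primes. -/
def lemmaGroup (S : Finset ℕ) : AddSubgroup (ℚ × ℚ) :=
  AddSubgroup.closure
    ({((1 : ℚ), (0 : ℚ)), ((0 : ℚ), (1 : ℚ)), ((1/2 : ℚ), (1/2 : ℚ))} ∪
      {x | ∃ p ∈ S, x = ((1 / (p : ℚ)), (0 : ℚ))} ∪
      {x | ∃ p : ℕ, p.Prime ∧ p ∉ S ∧ p ≠ 2 ∧
        ∃ k : ℕ, 1 ≤ k ∧ x = ((0 : ℚ), (1 / (p : ℚ) ^ k))})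

/-- Membership in the pure subgroup of `lemmaGroup S` generated by `v`. -/
def inPureGenBy (S : Finset ℕ) (v g : ℚ × ℚ) : Prop :=
  g ∈ lemmaGroup S ∧ ∃ n : ℕ, 1 ≤ n ∧ ∃ z : ℤ, (n : ℤ) • g = z • v

/-!
Let `M = ∏ p ∈ S, p` and let `π(x, y) = (x, M x)` be the projection of `ℚ²` onto the line
`ℚ a` along `ℚ g₂`. Each generator `x` of `G` satisfies `π x = 0` or `π x - x ∈ ℤ g₂`
(for `(g₁ + g₂)/2` because `M` is odd, for `g₁/p` because `p ∣ M`), so `π` maps `G` into itself.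
Hence `g = π g + (g - π g)` splits `g ∈ G` into elements of `G ∩ ℚ a` and `G ∩ ℚ g₂`, and these
two lines meet only in `0`.
-/

def projAlongSnd (c : ℚ) : ℚ × ℚ →+ ℚ × ℚ where
  toFun g := (g.1, c * g.1)
  map_zero' := by simp
  map_add' x y := by ext <;> simp [mul_add]

@[simp]
lemma projAlongSnd_apply (c : ℚ) (g : ℚ × ℚ) : projAlongSnd c g = (g.1, c * g.1) := rfl

lemma projAlongSnd_zero_fst (c y : ℚ) : projAlongSnd c (0, y) = 0 := by
  simp

lemma projAlongSnd_eq_smul (c : ℚ) (g : ℚ × ℚ) :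
    projAlongSnd c g = (2 * g.1) • ((1 / 2 : ℚ), c / 2) := by
  ext <;> simp <;> ring

lemma sub_projAlongSnd_eq_smul (c : ℚ) (g : ℚ × ℚ) :
    g - projAlongSnd c g = (g.2 - c * g.1) • ((0 : ℚ), (1 : ℚ)) := by
  ext <;> simp

lemma exists_nsmul_eq_zsmul_of_eq_smul {V : Type*} [AddCommGroup V] [Module ℚ V]
    {g v : V} {q : ℚ} (h : g = q • v) : ∃ n : ℕ, 1 ≤ n ∧ ∃ z : ℤ, (n : ℤ) • g = z • v := by
  refine ⟨q.den, q.den_pos, q.num, ?_⟩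
  rw [h, ← Int.cast_smul_eq_zsmul ℚ, ← Int.cast_smul_eq_zsmul ℚ, smul_smul]
  simp

lemma inPureGenBy_of_eq_smul {S : Finset ℕ} {v g : ℚ × ℚ} {q : ℚ} (hg : g ∈ lemmaGroup S)
    (h : g = q • v) : inPureGenBy S v g :=
  ⟨hg, exists_nsmul_eq_zsmul_of_eq_smul h⟩

lemma eq_zero_of_inPureGenBy_of_inPureGenBy_zero_one {S : Finset ℕ} {v g : ℚ × ℚ}
    (hv : v.1 ≠ 0) (hA : inPureGenBy S v g) (hB : inPureGenBy S ((0 : ℚ), (1 : ℚ)) g) :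
    g = 0 := by
  obtain ⟨-, n, hn, z, hnz⟩ := hA
  obtain ⟨-, m, hm, w, hmw⟩ := hB
  have hn0 : (n : ℤ) ≠ 0 := by omega
  have hm0 : m ≠ 0 := by omega
  have hg1 : g.1 = 0 := by
    simpa [hm0] using congrArg Prod.fst hmw
  have hz : z = 0 := by
    simpa [hg1, hv] using (congrArg Prod.fst hnz).symm
  rw [hz, zero_smul] at hnz
  exact (smul_eq_zero.mp hnz).resolve_left hn0

section lemmaGroup

variable {S : Finset ℕ}

lemma zero_one_mem_lemmaGroup : ((0 : ℚ), (1 : ℚ)) ∈ lemmaGroup S :=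
  AddSubgroup.subset_closure (by simp)

lemma projAlongSnd_mem_of_sub_eq_intCast {c : ℚ} {x : ℚ × ℚ} (hx : x ∈ lemmaGroup S) {k : ℤ}
    (hk : c * x.1 - x.2 = k) : projAlongSnd c x ∈ lemmaGroup S := by
  have hsplit : projAlongSnd c x = x + k • ((0 : ℚ), (1 : ℚ)) := by
    ext <;> simp [← hk]
  rw [hsplit]
  exact add_mem hx (zsmul_mem zero_one_mem_lemmaGroup k)

lemma projAlongSnd_mem_lemmaGroup (hM : Odd (∏ p ∈ S, p)) {g : ℚ × ℚ} (hg : g ∈ lemmaGroup S) :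
    projAlongSnd (∏ p ∈ S, p : ℕ) g ∈ lemmaGroup S := by
  set M := ∏ p ∈ S, p
  suffices (lemmaGroup S).map (projAlongSnd M) ≤ lemmaGroup S from this ⟨g, hg, rfl⟩
  rw [lemmaGroup, AddMonoidHom.map_closure, AddSubgroup.closure_le]
  rintro _ ⟨x, hx, rfl⟩
  have hmem : x ∈ lemmaGroup S := AddSubgroup.subset_closure hx
  rcases hx with (hx | ⟨p, hp, rfl⟩) | ⟨p, -, -, -, k, -, rfl⟩
  · rcases hx with rfl | rfl | rfl
    · exact projAlongSnd_mem_of_sub_eq_intCast hmem (k := M) (by simp)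
    · exact projAlongSnd_zero_fst M _ ▸ zero_mem _
    · obtain ⟨t, ht⟩ := hM
      refine projAlongSnd_mem_of_sub_eq_intCast hmem (k := t) ?_
      simp only [ht]
      push_cast
      ring
  · obtain ⟨q, hq⟩ : p ∣ M := Finset.dvd_prod_of_mem _ hp
    have hp0 : (p : ℚ) ≠ 0 := Nat.cast_ne_zero.mpr (hM.of_dvd_nat ⟨q, hq⟩).pos.ne'
    refine projAlongSnd_mem_of_sub_eq_intCast hmem (k := q) ?_
    simp only [hq]
    push_cast
    field_simp
    ring
  · exact projAlongSnd_zero_fst M _ ▸ zero_mem _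

end lemmaGroup

theorem lemma53_decomposition (S : Finset ℕ)
    (hS : ∀ p ∈ S, Nat.Prime p ∧ Odd p) :
    (∀ g ∈ lemmaGroup S,
      ∃ a b : ℚ × ℚ,
        inPureGenBy S ((1/2 : ℚ), ((∏ p ∈ S, p : ℕ) / 2 : ℚ)) a ∧
        inPureGenBy S ((0 : ℚ), (1 : ℚ)) b ∧ g = a + b) ∧
    (∀ g : ℚ × ℚ, inPureGenBy S ((1/2 : ℚ), ((∏ p ∈ S, p : ℕ) / 2 : ℚ)) g →
      inPureGenBy S ((0 : ℚ), (1 : ℚ)) g → g = 0) := by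
  have hM : Odd (∏ p ∈ S, p) :=
    Finset.prod_induction _ Odd (fun _ _ => Odd.mul) odd_one (fun p hp => (hS p hp).2)
  refine ⟨fun g hg => ?_, fun g hA hB => eq_zero_of_inPureGenBy_of_inPureGenBy_zero_one
    (by norm_num) hA hB⟩
  have hπ := projAlongSnd_mem_lemmaGroup hM hg
  exact ⟨_, _, inPureGenBy_of_eq_smul hπ (projAlongSnd_eq_smul _ g),
    inPureGenBy_of_eq_smul (sub_mem hg hπ) (sub_projAlongSnd_eq_smul _ g), by abel⟩
end

section
/- In the Fuchs example group G (subgroup of ℚ² generated by (1,0), (0,1), (1/2,1/2), (1/3^k,0), (0,1/5^k) for k ≥ 1), there is no element y ∈ G with 2y = (1,0), and no element z ∈ G with 2z = (0,1), even though (1/2,1/2) ∈ G, i.e., 2 divides (1,1) in G. -/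
lemma odd_of_dvd {m n : ℕ} (h : m ∣ n) (hn : Odd n) : Odd m := by
  rw [← Nat.not_even_iff_odd] at hn ⊢
  intro hm
  exact hn (hm.two_dvd.trans h |> (even_iff_two_dvd).mpr)

/-- Pairs whose coordinate difference has odd denominator form an additive subgroup. -/
def oddDiffSub : AddSubgroup (ℚ × ℚ) where
  carrier := {p | Odd (p.1 - p.2).den}
  zero_mem' := by simp
  add_mem' := by
    intro a b ha hb
    have key : ((a.1 + b.1) - (a.2 + b.2)) = (a.1 - a.2) + (b.1 - b.2) := by ring
    show Odd ((a + b).1 - (a + b).2).den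
    rw [Prod.fst_add, Prod.snd_add, key]
    exact odd_of_dvd (Rat.add_den_dvd _ _) (ha.mul hb)
  neg_mem' := by
    intro a ha
    show Odd ((-a).1 - (-a).2).den
    rw [Prod.fst_neg, Prod.snd_neg, show -a.1 - -a.2 = -(a.1 - a.2) by ring, Rat.neg_den]
    exact ha

lemma mem_oddDiffSub {p : ℚ × ℚ} : p ∈ oddDiffSub ↔ Odd (p.1 - p.2).den := Iff.rfl

lemma oneDivPow_den (p k : ℕ) (hp : 0 < p) : ((1 / (p : ℚ) ^ k)).den = p ^ k := by
  rw [one_div, ← inv_pow, Rat.den_pow, Rat.inv_natCast_den_of_pos hp]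

lemma fuchs_odd : fuchsGroup ≤ oddDiffSub := by
  apply (AddSubgroup.closure_le _).mpr
  intro x hx
  simp only [fuchsGens, Set.mem_union, Set.mem_insert_iff, Set.mem_singleton_iff,
    Set.mem_setOf_eq] at hx
  rcases hx with ((rfl | rfl | rfl) | ⟨k, -, rfl⟩) | ⟨k, -, rfl⟩ <;>
      rw [SetLike.mem_coe, mem_oddDiffSub]
  · norm_num
  · norm_num
  · norm_num
  · show Odd ((1 / (3:ℚ) ^ k) - 0).den
    rw [sub_zero, show ((3:ℚ)) = ((3:ℕ):ℚ) by norm_num, oneDivPow_den 3 k (by norm_num)]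
    exact Odd.pow (⟨1, rfl⟩)
  · show Odd ((0:ℚ) - 1 / (5:ℚ) ^ k).den
    rw [zero_sub, Rat.neg_den, show ((5:ℚ)) = ((5:ℕ):ℚ) by norm_num, oneDivPow_den 5 k (by norm_num)]
    exact Odd.pow (⟨2, rfl⟩)

lemma den_half : ((1/2 : ℚ)).den = 2 := by norm_num

theorem fuchs_two_divides_sum_not_parts :
    (¬ ∃ y ∈ fuchsGroup, (2 : ℤ) • y = (((1 : ℚ), (0 : ℚ)) : ℚ × ℚ)) ∧
    (¬ ∃ z ∈ fuchsGroup, (2 : ℤ) • z = (((0 : ℚ), (1 : ℚ)) : ℚ × ℚ)) ∧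
    (((1/2 : ℚ), (1/2 : ℚ)) : ℚ × ℚ) ∈ fuchsGroup ∧
    (∃ y ∈ fuchsGroup, (2 : ℤ) • y = (((1 : ℚ), (1 : ℚ)) : ℚ × ℚ)) := by
  have hhalf : (((1/2 : ℚ), (1/2 : ℚ)) : ℚ × ℚ) ∈ fuchsGroup :=
    AddSubgroup.subset_closure (by simp [fuchsGens])
  refine ⟨?_, ?_, hhalf, ⟨((1/2 : ℚ), (1/2 : ℚ)), hhalf, ?_⟩⟩
  · rintro ⟨y, hy, h⟩
    have h1 : (2:ℤ) • y.1 = 1 := by simpa using congrArg Prod.fst h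
    have h2 : (2:ℤ) • y.2 = 0 := by simpa using congrArg Prod.snd h
    rw [zsmul_eq_mul] at h1 h2
    push_cast at h1 h2
    have hy1 : y.1 = 1/2 := by linarith
    have hy2 : y.2 = 0 := by linarith
    have hodd : Odd (y.1 - y.2).den := mem_oddDiffSub.mp (fuchs_odd hy)
    rw [hy1, hy2, sub_zero, den_half] at hodd
    exact (Nat.not_odd_iff_even.mpr (by norm_num)) hodd
  · rintro ⟨z, hz, h⟩
    have h1 : (2:ℤ) • z.1 = 0 := by simpa using congrArg Prod.fst h
    have h2 : (2:ℤ) • z.2 = 1 := by simpa using congrArg Prod.snd h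
    rw [zsmul_eq_mul] at h1 h2
    push_cast at h1 h2
    have hz1 : z.1 = 0 := by linarith
    have hz2 : z.2 = 1/2 := by linarith
    have hodd : Odd (z.1 - z.2).den := mem_oddDiffSub.mp (fuchs_odd hz)
    rw [hz1, hz2, zero_sub, Rat.neg_den, den_half] at hodd
    exact (Nat.not_odd_iff_even.mpr (by norm_num)) hodd
  · show ((2:ℤ) • (1/2 : ℚ), (2:ℤ) • (1/2 : ℚ)) = ((1:ℚ), (1:ℚ))
    norm_num
end
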